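/- Let Ã_1, …, Ã_n be a solution of the Schlesinger equations S_(n,m) on a nonempty connected open set U with every Ã_k(u) upper triangular, and write λ_p^{(k)} := (Ã_k)_{pp} (which are constants). Then for every p and every q with 1 ≤ q ≤ m − p, the matrix entries satisfy: for i ≠ j, ∂(Ã_i)_{p,p+q}/∂u_j = [ (λ_{p+q}^{(j)} − λ_p^{(j)}) (Ã_i)_{p,p+q} − (λ_{p+q}^{(i)} − λ_p^{(i)}) (Ã_j)_{p,p+q} + Σ_{s=1}^{q−1} ( (Ã_i)_{p,p+s}(Ã_j)_{p+s,p+q} − (Ã_j)_{p,p+s}(Ã_i)_{p+s,p+q} ) ] / (u_i − u_j), and ∂(Ã_i)_{p,p+q}/∂u_i = −Σ_{j≠i} [ (λ_{p+q}^{(j)} − λ_p^{(j)}) (Ã_i)_{p,p+q} − (λ_{p+q}^{(i)} − λ_p^{(i)}) (Ã_j)_{p,p+q} + Σ_{s=1}^{q−1} ( (Ã_i)_{p,p+s}(Ã_j)_{p+s,p+q} − (Ã_j)_{p,p+s}(Ã_i)_{p+s,p+q} ) ] / (u_i − u_j), where for q = 1 the sums over s are empty. In particular, for each fixed q the entries (Ã_i)_{p,p+q},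 i = 1, …, n, satisfy a linear Pfaffian system whose inhomogeneous part involves only entries with smaller q. -/
import Mathlib


/- STATEMENT 6: For an upper-triangular solution Ã of the Schlesinger equations, the
strictly upper-triangular entries (Ã_i)_{ab}, a < b, satisfy the stated linear
Pfaffian system whose coefficients involve the (constant) diagonal entries
λ^{(k)} = (Ã_k)_{pp} and, in the inhomogeneous part, only entries that are closer to
the diagonal. (Entry (p,p+q) corresponds to the pair a = p < b = p+q, and the inner
sum over s = 1, …, q−1 is the sum over indices strictly between a and b.) -/

attribute [local instance] Matrix.normedAddCommGroup Matrix.normedSpace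

/-- Partial derivative in the direction of the `l`-th coordinate. -/
noncomputable def pd {n m : ℕ} (F : (Fin n → ℂ) → Matrix (Fin m) (Fin m) ℂ) (l : Fin n)
    (u : Fin n → ℂ) : Matrix (Fin m) (Fin m) ℂ :=
  fderiv ℂ F u (Pi.single l 1)

/-- The Schlesinger equations S_(n,m) on `U`. -/
def IsSchlesingerSol {n m : ℕ} (U : Set (Fin n → ℂ))
    (A : Fin n → (Fin n → ℂ) → Matrix (Fin m) (Fin m) ℂ) : Prop :=
  (∀ i j, i ≠ j → ∀ u ∈ U,
    pd (A i) j u = (u i - u j)⁻¹ • (A i u * A j u - A j u * A i u)) ∧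
  (∀ i, ∀ u ∈ U,
    pd (A i) i u
      = -∑ j ∈ Finset.univ.erase i, (u i - u j)⁻¹ • (A i u * A j u - A j u * A i u))

/-- The right-hand side (numerator) of the Pfaffian system for the entry `(a,b)`:
`(λ_b^{(j)} − λ_a^{(j)}) (Ã_i)_{ab} − (λ_b^{(i)} − λ_a^{(i)}) (Ã_j)_{ab}
 + Σ_{a<s<b} ((Ã_i)_{as}(Ã_j)_{sb} − (Ã_j)_{as}(Ã_i)_{sb})`. -/
noncomputable def rhsEntry {n m : ℕ} (A : Fin n → (Fin n → ℂ) → Matrix (Fin m) (Fin m) ℂ)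
    (i j : Fin n) (u : Fin n → ℂ) (a b : Fin m) : ℂ :=
  (A j u b b - A j u a a) * A i u a b - (A i u b b - A i u a a) * A j u a b
    + ∑ s ∈ Finset.Ioo a b, (A i u a s * A j u s b - A j u a s * A i u s b)

lemma comm_entry {m : ℕ} (X Y : Matrix (Fin m) (Fin m) ℂ)
    (hX : ∀ a b : Fin m, b < a → X a b = 0) (hY : ∀ a b : Fin m, b < a → Y a b = 0)
    (a b : Fin m) (hab : a < b) :
    (X * Y - Y * X) a b
      = (Y b b - Y a a) * X a b - (X b b - X a a) * Y a b
        + ∑ s ∈ Finset.Ioo a b, (X a s * Y s b - Y a s * X s b) := by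
  have hIcc : ∀ s : Fin m, s ∉ Finset.Icc a b →
      X a s * Y s b - Y a s * X s b = 0 := by
    intro s hs
    simp only [Finset.mem_Icc, not_and_or, not_le] at hs
    rcases hs with h | h
    · rw [hX a s h, hY a s h]; ring
    · rw [hX s b h, hY s b h]; ring
  have key : (X * Y - Y * X) a b = ∑ s ∈ Finset.Icc a b, (X a s * Y s b - Y a s * X s b) := by
    rw [Matrix.sub_apply, Matrix.mul_apply, Matrix.mul_apply, ← Finset.sum_sub_distrib]
    exact (Finset.sum_subset (Finset.subset_univ _) (fun s _ hs => hIcc s hs)).symm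
  have hsplit : Finset.Icc a b = insert a (insert b (Finset.Ioo a b)) := by
    ext s
    simp only [Finset.mem_Icc, Finset.mem_insert, Finset.mem_Ioo, Fin.lt_def, Fin.le_def,
      Fin.ext_iff]
    omega
  have hb : b ∉ Finset.Ioo a b := by
    simp only [Finset.mem_Ioo]
    exact fun h => absurd h.2 (lt_irrefl b)
  have ha : a ∉ insert b (Finset.Ioo a b) := by
    simp only [Finset.mem_insert, Finset.mem_Ioo]
    rintro (h | ⟨h, _⟩)
    · exact absurd h hab.ne
    · exact absurd h (lt_irrefl a)
  rw [key, hsplit, Finset.sum_insert ha, Finset.sum_insert hb]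
  ring

theorem schlesinger_triangular_entries_pfaffian {n m : ℕ} (hn : 2 ≤ n) (hm : 2 ≤ m)
    (U : Set (Fin n → ℂ)) (hU : IsOpen U) (hUconn : IsConnected U)
    (hdist : ∀ u ∈ U, ∀ i j : Fin n, i ≠ j → u i ≠ u j)
    (A : Fin n → (Fin n → ℂ) → Matrix (Fin m) (Fin m) ℂ)
    (hA : ∀ i, DifferentiableOn ℂ (A i) U)
    (hS : IsSchlesingerSol U A)
    (htri : ∀ k, ∀ u ∈ U, ∀ a b : Fin m, b < a → A k u a b = 0) :
    ∀ a b : Fin m, a < b →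
      (∀ i j : Fin n, i ≠ j → ∀ u ∈ U,
        pd (A i) j u a b = (u i - u j)⁻¹ * rhsEntry A i j u a b) ∧
      (∀ i : Fin n, ∀ u ∈ U,
        pd (A i) i u a b
          = -∑ j ∈ Finset.univ.erase i, (u i - u j)⁻¹ * rhsEntry A i j u a b) := by
  intro a b hab
  have hrhs : ∀ (i j : Fin n) (u : Fin n → ℂ), u ∈ U →
      (A i u * A j u - A j u * A i u) a b = rhsEntry A i j u a b := by
    intro i j u hu
    rw [comm_entry (A i u) (A j u) (htri i u hu) (htri j u hu) a b hab, rhsEntry]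
  constructor
  · intro i j hij u hu
    have h := congrArg (fun M : Matrix (Fin m) (Fin m) ℂ => M a b) (hS.1 i j hij u hu)
    simpa [Matrix.smul_apply, smul_eq_mul, hrhs i j u hu] using h
  · intro i u hu
    have h := congrArg (fun M : Matrix (Fin m) (Fin m) ℂ => M a b) (hS.2 i u hu)
    simp only [Matrix.neg_apply, Matrix.sum_apply, Matrix.smul_apply, smul_eq_mul] at h
    rw [h]
    congr 1
    exact Finset.sum_congr rfl fun j _ => by rw [hrhs i j u hu]
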